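/- (Algebraic core of Theorem 5.2(1)) Let χ = (χ_0,…,χ_n) be a normalized divisive weight vector. Let Γ = {(g_0,…,g_n) ∈ (S^±_ℤ(α))^{n+1} : for all 0 ≤ j < i ≤ n, the element 1 − α_{n−j}·α_{n−i}^{−χ_{n−j}/χ_{n−i}} divides g_i − g_j}, with the convention α_0 = 1. Then the map h sending g ∈ Γ to the family whose component at a nonempty subset A ⊆ {0,…,n} is the class of g_{n − min A} in S^±_ℤ(α)/J_A is well defined (for all a, a' ∈ A one has g_{n−a} ≡ g_{n−a'} mod J_A), and h is a ring isomorphism from Γ onto the ring P_K(α;Σ_χ) of integral piecewise Laurent polynomials on Σ_χ. -/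

import Mathlib

set_option synthInstance.maxHeartbeats 400000

noncomputable section

/-- The Laurent polynomial ring `S^±_ℤ(α) = ℤ[α₁^{±1},…,αₙ^{±1}]`, realised as the
group algebra of `ℤⁿ` over `ℤ`; the monomial `α^J` is `AddMonoidAlgebra.single J 1`. -/
abbrev LaurentZ (n : ℕ) := AddMonoidAlgebra ℤ (Fin n → ℤ)

/-- The value `χ_k` of a weight vector at a natural-number index `k ≤ n`
(junk value `1` for `k > n`). -/
def chN (n : ℕ) (χ : Fin (n + 1) → ℕ) (k : ℕ) : ℕ :=
  if h : k < n + 1 then χ ⟨k, h⟩ else 1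

/-- The exponent vector of `α_k ∈ ℤⁿ` (the variable `α_k` corresponds to the `Fin n`
index `m` with `m + 1 = k`), with the convention that `α₀ = 1`, i.e. exponent `0`. -/
def avec (n : ℕ) (k : ℕ) : Fin n → ℤ :=
  fun m => if (m : ℕ) + 1 = k then 1 else 0

/-- The exponent vector of the monomial `α_l·α_k^{−χ_l/χ_k}` (convention `α₀ = 1`, so
the vector for `k = 0` is that of `α_l`, as `χ₀ = 1` for normalized `χ`). -/
def wexp (n : ℕ) (χ : Fin (n + 1) → ℕ) (k l : ℕ) : Fin n → ℤ :=
  fun m => avec n l m - ((chN n χ l / chN n χ k : ℕ) : ℤ) * avec n k m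

/-- The K-theoretic equivariant Euler class `1 − α_l·α_k^{−χ_l/χ_k}`. -/
def ekl (n : ℕ) (χ : Fin (n + 1) → ℕ) (k l : ℕ) : LaurentZ n :=
  1 - AddMonoidAlgebra.single (wexp n χ k l) 1

/-- The ideal `J_A ⊆ S^±_ℤ(α)` generated by the elements `1 − α_l·α_k^{−χ_l/χ_k}`
for all `k < l` with `k, l ∈ A`. -/
def JA (n : ℕ) (χ : Fin (n + 1) → ℕ) (A : Finset (Fin (n + 1))) : Ideal (LaurentZ n) :=
  Ideal.span {f | ∃ k l : Fin (n + 1), k ∈ A ∧ l ∈ A ∧ (k : ℕ) < (l : ℕ) ∧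
    f = ekl n χ (k : ℕ) (l : ℕ)}

lemma JA_mono (n : ℕ) (χ : Fin (n + 1) → ℕ) {A A' : Finset (Fin (n + 1))} (h : A ⊆ A') :
    JA n χ A ≤ JA n χ A' :=
  Ideal.span_mono (by rintro f ⟨k, l, hk, hl, hkl, rfl⟩; exact ⟨k, l, h hk, h hl, hkl, rfl⟩)

/-- The GKM ring `Γ`: tuples `(g₀,…,gₙ)` of Laurent polynomials such that
`1 − α_{n−j}·α_{n−i}^{−χ_{n−j}/χ_{n−i}}` divides `gᵢ − gⱼ` for all `0 ≤ j < i ≤ n`. -/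
def GammaK (n : ℕ) (χ : Fin (n + 1) → ℕ) : Subring (Fin (n + 1) → LaurentZ n) where
  carrier := {g | ∀ i j : Fin (n + 1), (j : ℕ) < (i : ℕ) →
    ekl n χ (n - (i : ℕ)) (n - (j : ℕ)) ∣ g i - g j}
  zero_mem' := by intro i j _; simp
  one_mem' := by intro i j _; simp
  add_mem' := by
    intro a b ha hb i j hij
    simpa [add_sub_add_comm] using dvd_add (ha i j hij) (hb i j hij)
  neg_mem' := by
    intro a ha i j hij
    simpa [neg_sub_neg, ← sub_eq_neg_add] using (ha i j hij).neg_right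
  mul_mem' := by
    intro a b ha hb i j hij
    have e : a i * b i - a j * b j = (a i - a j) * b i + a j * (b i - b j) := by ring
    have : ekl n χ (n - (i : ℕ)) (n - (j : ℕ)) ∣ a i * b i - a j * b j := by
      rw [e]; exact dvd_add ((ha i j hij).mul_right _) ((hb i j hij).mul_left _)
    simpa using this

/-- The nonempty subsets of `{0,…,n}`, indexing the cones of the fan `Σ_χ`. -/
abbrev NESet (n : ℕ) := {A : Finset (Fin (n + 1)) // A.Nonempty}

/-- The ring `P_K(α;Σ_χ)` of integral piecewise Laurent polynomials on the fan `Σ_χ`: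
families `(f_A)` over the nonempty `A ⊆ {0,…,n}`, with `f_A ∈ S^±_ℤ(α)/J_A`,
compatible under the projections `S^±_ℤ(α)/J_A → S^±_ℤ(α)/J_{A'}` for `A ⊆ A'`. -/
def PKring (n : ℕ) (χ : Fin (n + 1) → ℕ) :
    Subring (Π A : NESet n, LaurentZ n ⧸ JA n χ A.1) where
  carrier := {f | ∀ (A A' : NESet n) (h : A.1 ⊆ A'.1),
    Ideal.Quotient.factor (JA_mono n χ h) (f A) = f A'}
  zero_mem' := by intro A A' h; simp only [Pi.zero_apply, map_zero]
  one_mem' := by intro A A' h; simp only [Pi.one_apply, map_one]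
  add_mem' := by
    intro a b ha hb A A' h
    simp only [Pi.add_apply, map_add, ha A A' h, hb A A' h]
  neg_mem' := by
    intro a ha A A' h
    simp only [Pi.neg_apply, map_neg, ha A A' h]
  mul_mem' := by
    intro a b ha hb A A' h
    simp only [Pi.mul_apply, map_mul, ha A A' h, hb A A' h]

/-! The GKM condition on `Γ` only involves pairs of indices, and `J_A` is generated by the
Euler classes of the pairs in `A`. Hence the values `g_{n−a}`, `a ∈ A`, all agree modulo `J_A`,
and conversely a compatible family is determined by its components on the singletons
`{a}` (where `J_{a} = 0`), which satisfy the GKM condition because `J_{k,l}` is generated by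
the single Euler class `1 − α_l·α_k^{−χ_l/χ_k}`. -/

theorem Fin.val_rev_eq_sub {n : ℕ} (a : Fin (n + 1)) : (a.rev : ℕ) = n - a := by
  rw [Fin.val_rev]; omega

theorem Fin.mk_sub_eq_rev {n : ℕ} (a : Fin (n + 1)) (h : n - (a : ℕ) < n + 1) :
    (⟨n - (a : ℕ), h⟩ : Fin (n + 1)) = a.rev :=
  Fin.ext (Fin.val_rev_eq_sub a).symm

section

variable {n : ℕ} {χ : Fin (n + 1) → ℕ}

theorem ekl_mem_JA {A : Finset (Fin (n + 1))} {k l : Fin (n + 1)} (hk : k ∈ A) (hl : l ∈ A)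
    (hkl : k < l) : ekl n χ k l ∈ JA n χ A :=
  Ideal.subset_span ⟨k, l, hk, hl, hkl, rfl⟩

theorem JA_singleton (a : Fin (n + 1)) : JA n χ {a} = ⊥ := by
  rw [eq_bot_iff, JA, Ideal.span_le]
  rintro f ⟨k, l, hk, hl, hkl, -⟩
  rw [Finset.mem_singleton] at hk hl
  subst hk hl
  exact absurd hkl (lt_irrefl _)

theorem JA_pair {k l : Fin (n + 1)} (hkl : k < l) :
    JA n χ {k, l} = Ideal.span {ekl n χ k l} := by
  refine le_antisymm ?_ ?_
  · rw [JA, Ideal.span_le]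
    rintro f ⟨k', l', hk', hl', hkl', rfl⟩
    simp only [Finset.mem_insert, Finset.mem_singleton] at hk' hl'
    rcases hk' with rfl | rfl <;> rcases hl' with rfl | rfl <;> first
      | exact Ideal.subset_span rfl
      | exact absurd hkl' (by omega)
  · rw [Ideal.span_le, Set.singleton_subset_iff]
    exact ekl_mem_JA (by simp) (by simp) hkl

/-- The GKM condition of `Γ`, reindexed by `a ↦ n − a` so that it reads as in `J_A`. -/
theorem mem_GammaK_iff {g : Fin (n + 1) → LaurentZ n} :
    g ∈ GammaK n χ ↔ ∀ k l : Fin (n + 1), k < l → ekl n χ k l ∣ g k.rev - g l.rev := by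
  have val_sub_rev (a : Fin (n + 1)) : n - (a.rev : ℕ) = a := by
    rw [Fin.val_rev_eq_sub]; omega
  change (∀ i j : Fin (n + 1), (j : ℕ) < i → _) ↔ _
  constructor
  · intro hg k l hkl
    simpa only [val_sub_rev] using hg k.rev l.rev (Fin.rev_lt_rev.mpr hkl)
  · intro hg i j hji
    simpa only [Fin.rev_rev, Fin.val_rev_eq_sub] using hg i.rev j.rev (Fin.rev_lt_rev.mpr hji)

theorem GammaK.mk_apply_rev_eq {g : Fin (n + 1) → LaurentZ n} (hg : g ∈ GammaK n χ)
    {A : Finset (Fin (n + 1))} {a a' : Fin (n + 1)} (ha : a ∈ A) (ha' : a' ∈ A) :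
    Ideal.Quotient.mk (JA n χ A) (g a.rev) = Ideal.Quotient.mk (JA n χ A) (g a'.rev) := by
  wlog h : a < a' generalizing a a'
  · rcases (not_lt.mp h).eq_or_lt with rfl | h'
    · rfl
    · exact (this ha' ha h').symm
  obtain ⟨c, hc⟩ := mem_GammaK_iff.mp hg a a' h
  rw [Ideal.Quotient.eq, hc]
  exact Ideal.mul_mem_right _ _ (ekl_mem_JA ha ha' h)

theorem PKring.mk_eq_apply {f : PKring n χ} {a : Fin (n + 1)} {x : LaurentZ n}
    (hx : Ideal.Quotient.mk (JA n χ {a}) x = f.1 ⟨{a}, Finset.singleton_nonempty a⟩)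
    (A : NESet n) (ha : a ∈ A.1) : Ideal.Quotient.mk (JA n χ A.1) x = f.1 A := by
  rw [← f.2 ⟨{a}, Finset.singleton_nonempty a⟩ A (Finset.singleton_subset_iff.mpr ha), ← hx,
    Ideal.Quotient.factor_mk]

variable (n χ)

def gammaToPK : GammaK n χ →+* PKring n χ where
  toFun g := ⟨fun A => Ideal.Quotient.mk (JA n χ A.1) (g.1 (A.1.min' A.2).rev),
    fun A A' hAA' => by
      rw [Ideal.Quotient.factor_mk]
      exact GammaK.mk_apply_rev_eq g.2 (hAA' (A.1.min'_mem A.2)) (A'.1.min'_mem A'.2)⟩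
  map_one' := rfl
  map_mul' _ _ := rfl
  map_zero' := rfl
  map_add' _ _ := rfl

theorem gammaToPK_apply_coe (g : GammaK n χ) (A : NESet n) :
    (gammaToPK n χ g).1 A = Ideal.Quotient.mk (JA n χ A.1) (g.1 (A.1.min' A.2).rev) :=
  rfl

theorem gammaToPK_injective : Function.Injective (gammaToPK n χ) := by
  intro g g' h
  ext1; funext i
  have hi := congrArg (fun f : PKring n χ => f.1 ⟨{i.rev}, Finset.singleton_nonempty _⟩) h
  simpa only [gammaToPK_apply_coe, Finset.min'_singleton,
    Fin.rev_rev, Ideal.Quotient.eq, JA_singleton, Ideal.mem_bot, sub_eq_zero] using hi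

theorem gammaToPK_surjective : Function.Surjective (gammaToPK n χ) := by
  intro f
  choose x hx using fun a : Fin (n + 1) =>
    Ideal.Quotient.mk_surjective (f.1 ⟨{a}, Finset.singleton_nonempty a⟩)
  have hg : (fun i => x i.rev) ∈ GammaK n χ := by
    refine mem_GammaK_iff.mpr fun k l hkl => ?_
    let P : NESet n := ⟨{k, l}, Finset.insert_nonempty _ _⟩
    have hkl_mem : x k - x l ∈ JA n χ {k, l} := Ideal.Quotient.eq.mp <|
      (PKring.mk_eq_apply (hx k) P (by simp [P])).trans
        (PKring.mk_eq_apply (hx l) P (by simp [P])).symm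
    simpa only [Fin.rev_rev, JA_pair hkl, Ideal.mem_span_singleton] using hkl_mem
  refine ⟨⟨_, hg⟩, Subtype.ext (funext fun A => ?_)⟩
  simpa only [gammaToPK_apply_coe, Fin.rev_rev] using
    PKring.mk_eq_apply (hx _) A (A.1.min'_mem A.2)

end

theorem gamma_iso_piecewise_laurent_general (n : ℕ) (χ : Fin (n + 1) → ℕ) :
    (∀ g ∈ GammaK n χ, ∀ A : Finset (Fin (n + 1)), A.Nonempty →
      ∀ a ∈ A, ∀ a' ∈ A,
        Ideal.Quotient.mk (JA n χ A)
            (g ⟨n - (a : ℕ), Nat.lt_succ_of_le (Nat.sub_le n _)⟩) =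
          Ideal.Quotient.mk (JA n χ A)
            (g ⟨n - (a' : ℕ), Nat.lt_succ_of_le (Nat.sub_le n _)⟩)) ∧
    ∃ φ : GammaK n χ ≃+* PKring n χ,
      ∀ (g : GammaK n χ) (A : NESet n),
        (φ g).1 A = Ideal.Quotient.mk (JA n χ A.1)
          (g.1 ⟨n - (A.1.min' A.2 : ℕ), Nat.lt_succ_of_le (Nat.sub_le n _)⟩) := by
  simp only [Fin.mk_sub_eq_rev]
  refine ⟨fun g hg A _ a ha a' ha' => GammaK.mk_apply_rev_eq hg ha ha', ?_⟩
  exact ⟨RingEquiv.ofBijective (gammaToPK n χ)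
    ⟨gammaToPK_injective n χ, gammaToPK_surjective n χ⟩, gammaToPK_apply_coe n χ⟩

/-- **Algebraic core of Theorem 5.2(1).**
For a normalized divisive weight vector `χ`, the map sending `g ∈ Γ` to the family
whose component at a nonempty `A ⊆ {0,…,n}` is the class of `g_{n − min A}` in
`S^±_ℤ(α)/J_A` is well defined (`g_{n−a} ≡ g_{n−a′}` mod `J_A` for all `a, a′ ∈ A`)
and is a ring isomorphism from `Γ` onto the ring `P_K(α;Σ_χ)` of integral piecewise
Laurent polynomials on `Σ_χ`. -/
theorem gamma_iso_piecewise_laurent (n : ℕ) (χ : Fin (n + 1) → ℕ)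
    (hpos : ∀ j, 0 < χ j)
    (hdiv : ∀ j : Fin n, χ j.castSucc ∣ χ j.succ)
    (hnorm : ∀ j : Fin (n + 1), Finset.gcd (Finset.univ.erase j) χ = 1) :
    (∀ g ∈ GammaK n χ, ∀ A : Finset (Fin (n + 1)), A.Nonempty →
      ∀ a ∈ A, ∀ a' ∈ A,
        Ideal.Quotient.mk (JA n χ A)
            (g ⟨n - (a : ℕ), Nat.lt_succ_of_le (Nat.sub_le n _)⟩) =
          Ideal.Quotient.mk (JA n χ A)
            (g ⟨n - (a' : ℕ), Nat.lt_succ_of_le (Nat.sub_le n _)⟩)) ∧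
    ∃ φ : GammaK n χ ≃+* PKring n χ,
      ∀ (g : GammaK n χ) (A : NESet n),
        (φ g).1 A = Ideal.Quotient.mk (JA n χ A.1)
          (g.1 ⟨n - (A.1.min' A.2 : ℕ), Nat.lt_succ_of_le (Nat.sub_le n _)⟩) :=
  gamma_iso_piecewise_laurent_general n χ
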